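/- arXiv:2405.04764 — 4 statements merged into one kernel-verified Lean document; each statement's English description precedes it below -/
import Mathlib

section
/- The unique root π₁ ∈ [0,1] of g(p) = ρ_L(1-p) - ρ_H p - p(1-p)Λ satisfies π₁ < π₀ = ρ_L/(ρ_L+ρ_H), and π₁ is strictly decreasing in Λ, tending to π₀ as Λ → 0⁺ and to 0 as Λ → ∞. -/
open Set Filter

/-- The unique root `π₁(Λ) ∈ [0,1]` of `g(p) = ρ_L(1-p) - ρ_H p - p(1-p)Λ`
satisfies `π₁ < π₀ = ρ_L/(ρ_L+ρ_H)`, is strictly decreasing in `Λ`, tends to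
`π₀` as `Λ → 0⁺` and to `0` as `Λ → ∞`. -/
theorem stmt_2 (ρL ρH : ℝ) (hρL : 0 < ρL) (hρH : 0 < ρH)
    (π₁ : ℝ → ℝ)
    (hroot : ∀ Λ > (0:ℝ), π₁ Λ ∈ Icc (0:ℝ) 1 ∧
      ρL * (1 - π₁ Λ) - ρH * π₁ Λ - π₁ Λ * (1 - π₁ Λ) * Λ = 0)
    (huniq : ∀ Λ > (0:ℝ), ∀ p ∈ Icc (0:ℝ) 1,
      ρL * (1 - p) - ρH * p - p * (1 - p) * Λ = 0 → p = π₁ Λ) :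
    (∀ Λ > (0:ℝ), π₁ Λ < ρL / (ρL + ρH)) ∧
    StrictAntiOn π₁ (Ioi 0) ∧
    Tendsto π₁ (nhdsWithin 0 (Ioi 0)) (nhds (ρL / (ρL + ρH))) ∧
    Tendsto π₁ atTop (nhds 0) := by
  have hsum : (0:ℝ) < ρL + ρH := by linarith
  -- basic facts about the root
  have basic : ∀ Λ > (0:ℝ), 0 < π₁ Λ ∧ π₁ Λ < 1 ∧
      ρL * (1 - π₁ Λ) - ρH * π₁ Λ = π₁ Λ * (1 - π₁ Λ) * Λ := by
    intro Λ hΛ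
    obtain ⟨⟨h0, h1⟩, heq⟩ := hroot Λ hΛ
    have hne0 : 0 < π₁ Λ := by
      rcases eq_or_lt_of_le h0 with h | h
      · exfalso; rw [← h] at heq; nlinarith
      · exact h
    have hne1 : π₁ Λ < 1 := by
      rcases eq_or_lt_of_le h1 with h | h
      · exfalso; rw [h] at heq; nlinarith
      · exact h
    exact ⟨hne0, hne1, by linarith⟩
  -- the key identity: Λ = ρL/π₁Λ - ρH/(1-π₁Λ)
  have hF : ∀ Λ > (0:ℝ), Λ = ρL / π₁ Λ - ρH / (1 - π₁ Λ) := by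
    intro Λ hΛ
    obtain ⟨h0, h1, heq⟩ := basic Λ hΛ
    have h1' : (0:ℝ) < 1 - π₁ Λ := by linarith
    field_simp
    nlinarith [heq]
  -- π₁ < π₀
  have hlt : ∀ Λ > (0:ℝ), π₁ Λ < ρL / (ρL + ρH) := by
    intro Λ hΛ
    obtain ⟨h0, h1, heq⟩ := basic Λ hΛ
    rw [lt_div_iff₀ hsum]
    nlinarith [mul_pos (mul_pos h0 (by linarith : (0:ℝ) < 1 - π₁ Λ)) hΛ]
  refine ⟨hlt, ?_, ?_, ?_⟩
  · -- strict antitone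
    intro a ha b hb hab
    obtain ⟨ha0, ha1, -⟩ := basic a ha
    obtain ⟨hb0, hb1, -⟩ := basic b hb
    by_contra h
    push_neg at h
    have h1 : ρL / π₁ b ≤ ρL / π₁ a :=
      div_le_div_of_nonneg_left hρL.le ha0 h
    have h2 : ρH / (1 - π₁ a) ≤ ρH / (1 - π₁ b) :=
      div_le_div_of_nonneg_left hρH.le (by linarith) (by linarith)
    have := hF a ha
    have := hF b hb
    linarith
  · -- limit at 0⁺
    have hlow : ∀ Λ > (0:ℝ), ρL / (ρL + ρH) - Λ / (4 * (ρL + ρH)) ≤ π₁ Λ := by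
      intro Λ hΛ
      obtain ⟨h0, h1, heq⟩ := basic Λ hΛ
      rw [div_sub_div _ _ hsum.ne' (by positivity), div_le_iff₀ (by positivity)]
      nlinarith [mul_nonneg hsum.le (mul_nonneg hΛ.le (sq_nonneg (π₁ Λ - 1/2))), mul_pos hsum hΛ, sq_nonneg (π₁ Λ - 1/2)]
    refine tendsto_of_tendsto_of_tendsto_of_le_of_le'
      (g := fun Λ => ρL / (ρL + ρH) - Λ / (4 * (ρL + ρH)))
      (h := fun _ => ρL / (ρL + ρH)) ?_ tendsto_const_nhds ?_ ?_
    · have : Continuous fun Λ : ℝ => ρL / (ρL + ρH) - Λ / (4 * (ρL + ρH)) :=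
        continuous_const.sub (continuous_id.div_const _)
      have := (this.tendsto 0).mono_left (nhdsWithin_le_nhds (s := Ioi (0:ℝ)))
      simpa using this
    · filter_upwards [self_mem_nhdsWithin] with Λ hΛ
      exact hlow Λ hΛ
    · filter_upwards [self_mem_nhdsWithin] with Λ hΛ
      exact (hlt Λ hΛ).le
  · -- limit at ∞
    have hup : ∀ Λ > (0:ℝ), π₁ Λ ≤ ρL / Λ := by
      intro Λ hΛ
      obtain ⟨h0, h1, heq⟩ := basic Λ hΛ
      rw [le_div_iff₀ hΛ]
      have key : (1 - π₁ Λ) * (ρL - π₁ Λ * Λ) ≥ 0 := by nlinarith [mul_nonneg hρH.le h0.le]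
      nlinarith [key]
    refine tendsto_of_tendsto_of_tendsto_of_le_of_le'
      (g := fun _ => (0:ℝ)) (h := fun Λ => ρL / Λ)
      tendsto_const_nhds (tendsto_const_nhds.div_atTop tendsto_id) ?_ ?_
    · filter_upwards [eventually_gt_atTop (0:ℝ)] with Λ hΛ
      exact (basic Λ hΛ).1.le
    · filter_upwards [eventually_gt_atTop (0:ℝ)] with Λ hΛ
      exact hup Λ hΛ
end

section
/- The function σ(p) = h(p)·c / (p²(1-p)·Λ·(r+ρ_L+ρ_H)), where h(p) = ρ_L(1-p) - ρ_H p, is strictly decreasing on (0,π₀], with σ(p) → +∞ as p → 0⁺ and σ(π₀) = 0. -/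
/-!
Since `ρL (1 - p) - ρH p = (1 - p) (ρL - ρH · p / (1 - p))`, for `0 < p < 1`
`σ(p) = c / (Λ (r + ρL + ρH)) · (ρL - ρH · p / (1 - p)) · p⁻²`.
The odds `p / (1 - p)` increase, so the middle factor is strictly decreasing; it is nonnegative
exactly up to `π₀`, and `p⁻²` is positive and decreasing, so the product is strictly decreasing
on `(0, π₀]`. As `p → 0⁺` the middle factor tends to `ρL > 0` while `p⁻² → ∞`.
-/

open Set Filter Topology

theorem StrictAntiOn.mul_of_nonneg_of_pos {α β : Type*} [Preorder α] [Mul β] [Zero β] [Preorder β]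
    [PosMulMono β] [MulPosStrictMono β] {f g : α → β} {s : Set α} (hf : StrictAntiOn f s)
    (hg : AntitoneOn g s) (hf₀ : ∀ x ∈ s, 0 ≤ f x) (hg₀ : ∀ x ∈ s, 0 < g x) :
    StrictAntiOn (fun x => f x * g x) s := fun a ha b hb hab =>
  calc f b * g b ≤ f b * g a := mul_le_mul_of_nonneg_left (hg ha hb hab.le) (hf₀ b hb)
    _ < f a * g a := mul_lt_mul_of_pos_right (hf ha hb hab) (hg₀ a ha)

theorem strictMonoOn_div_one_sub_self : StrictMonoOn (fun p : ℝ => p / (1 - p)) (Iio 1) := by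
  intro a ha b hb hab
  rw [div_lt_div_iff₀ (sub_pos.2 ha) (sub_pos.2 hb)]
  linarith

theorem antitoneOn_inv_sq : AntitoneOn (fun p : ℝ => (p ^ 2)⁻¹) (Ioi 0) := fun _ ha _ _ hab =>
  inv_anti₀ (pow_pos ha 2) (pow_le_pow_left₀ (le_of_lt ha) hab 2)

/-- The function `σ` of the paper, with `R` standing for `r + ρL + ρH`. -/
noncomputable def sigma (ρL ρH Λ c R p : ℝ) : ℝ :=
  (ρL * (1 - p) - ρH * p) * c / (p ^ 2 * (1 - p) * Λ * R)

section

variable {ρL ρH : ℝ}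

theorem strictAntiOn_sub_mul_odds (hρH : 0 < ρH) :
    StrictAntiOn (fun p : ℝ => ρL - ρH * (p / (1 - p))) (Iio 1) := fun _ ha _ hb hab =>
  sub_lt_sub_left (mul_lt_mul_of_pos_left (strictMonoOn_div_one_sub_self ha hb hab) hρH) ρL

theorem sub_mul_odds_nonneg (hρ : 0 < ρL + ρH) {p : ℝ} (hp : p ≤ ρL / (ρL + ρH)) (hp₁ : p < 1) :
    0 ≤ ρL - ρH * (p / (1 - p)) := by
  rw [le_div_iff₀ hρ] at hp
  rw [sub_nonneg, mul_div_assoc', div_le_iff₀ (sub_pos.2 hp₁)]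
  linarith

theorem sigma_eq {Λ c R p : ℝ} (hp : p ∈ Ioo 0 1) :
    sigma ρL ρH Λ c R p = c / (Λ * R) * ((ρL - ρH * (p / (1 - p))) * (p ^ 2)⁻¹) := by
  have : 1 - p ≠ 0 := (sub_pos.2 hp.2).ne'
  unfold sigma
  field_simp

variable {Λ c R : ℝ}

theorem strictAntiOn_sigma (hρH : 0 < ρH) (hρ : 0 < ρL + ρH) (hΛ : 0 < Λ) (hc : 0 < c)
    (hR : 0 < R) : StrictAntiOn (sigma ρL ρH Λ c R) (Ioc 0 (ρL / (ρL + ρH))) := by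
  have hπ₀ : ρL / (ρL + ρH) < 1 := (div_lt_one hρ).2 (by linarith)
  have hsub : Ioc 0 (ρL / (ρL + ρH)) ⊆ Ioo 0 1 := fun p hp => ⟨hp.1, hp.2.trans_lt hπ₀⟩
  have hprod : StrictAntiOn (fun p => (ρL - ρH * (p / (1 - p))) * (p ^ 2)⁻¹)
      (Ioc 0 (ρL / (ρL + ρH))) :=
    ((strictAntiOn_sub_mul_odds hρH).mono fun p hp => (hsub hp).2).mul_of_nonneg_of_pos
      (antitoneOn_inv_sq.mono fun p hp => hp.1)
      (fun p hp => sub_mul_odds_nonneg hρ hp.2 (hsub hp).2) fun p hp => inv_pos.2 (pow_pos hp.1 2)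
  refine StrictAntiOn.congr (fun a ha b hb hab => ?_) fun p hp => (sigma_eq (hsub hp)).symm
  exact mul_lt_mul_of_pos_left (hprod ha hb hab) (by positivity)

theorem tendsto_sigma_nhdsGT_zero (hρL : 0 < ρL) (hΛ : 0 < Λ) (hc : 0 < c) (hR : 0 < R) :
    Tendsto (sigma ρL ρH Λ c R) (𝓝[>] 0) atTop := by
  have hfactor : Tendsto (fun p : ℝ => ρL - ρH * (p / (1 - p))) (𝓝[>] 0) (𝓝 ρL) := by
    have : ContinuousAt (fun p : ℝ => ρL - ρH * (p / (1 - p))) 0 := by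
      fun_prop (disch := norm_num)
    simpa using this.tendsto.mono_left nhdsWithin_le_nhds
  have hinv : Tendsto (fun p : ℝ => (p ^ 2)⁻¹) (𝓝[>] 0) atTop := by
    simpa only [inv_pow, Function.comp_def] using (tendsto_pow_atTop two_ne_zero).comp (tendsto_inv_nhdsGT_zero (𝕜 := ℝ))
  refine (Tendsto.const_mul_atTop (show 0 < c / (Λ * R) by positivity) (Tendsto.pos_mul_atTop hρL hfactor hinv)).congr' ?_
  filter_upwards [Ioo_mem_nhdsGT zero_lt_one] with p hp
  exact (sigma_eq hp).symm

theorem sigma_div_add_eq_zero : sigma ρL ρH Λ c R (ρL / (ρL + ρH)) = 0 := by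
  unfold sigma
  rcases eq_or_ne (ρL + ρH) 0 with hρ | hρ
  · simp [hρ]
  · have : ρL * (1 - ρL / (ρL + ρH)) - ρH * (ρL / (ρL + ρH)) = 0 := by
      field_simp
      ring
    rw [this, zero_mul, zero_div]

end

/-- `σ(p) = (ρ_L(1-p) - ρ_H p)·c / (p²(1-p)·Λ·(r+ρ_L+ρ_H))` is strictly
decreasing on `(0,π₀]`, with `σ(p) → +∞` as `p → 0⁺` and `σ(π₀) = 0`. -/
theorem stmt_3 (ρL ρH Λ c r : ℝ) (hρL : 0 < ρL) (hρH : 0 < ρH)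
    (hΛ : 0 < Λ) (hc : 0 < c) (hr : 0 < r) :
    StrictAntiOn
      (fun p : ℝ => (ρL * (1 - p) - ρH * p) * c / (p ^ 2 * (1 - p) * Λ * (r + ρL + ρH)))
      (Ioc 0 (ρL / (ρL + ρH))) ∧
    Tendsto
      (fun p : ℝ => (ρL * (1 - p) - ρH * p) * c / (p ^ 2 * (1 - p) * Λ * (r + ρL + ρH)))
      (nhdsWithin 0 (Ioi 0)) atTop ∧
    (ρL * (1 - (ρL / (ρL + ρH))) - ρH * (ρL / (ρL + ρH))) * c /
      ((ρL / (ρL + ρH)) ^ 2 * (1 - ρL / (ρL + ρH)) * Λ * (r + ρL + ρH)) = 0 := by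
  have hR : 0 < r + ρL + ρH := by linarith
  exact ⟨strictAntiOn_sigma hρH (by linarith) hΛ hc hR, tendsto_sigma_nhdsGT_zero hρL hΛ hc hR,
    sigma_div_add_eq_zero⟩
end

section
/- The map p ↦ h(p)/(p²(1-p)) is strictly decreasing on (0, π₀], where h(p) = ρ_L(1-p) - ρ_H p; equivalently, its derivative (-2p²(ρ_H+ρ_L) + p(ρ_H+4ρ_L) - 2ρ_L)/((1-p)²p³) is negative on (0,π₀], because the numerator, as a function of p, attains its maximum on [0,π₀] at p = π₀ with maximal value -ρ_L ρ_H/(ρ_H+ρ_L) < 0. -/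
open Set

/-!
With `S = ρL + ρH` and `π₀ = ρL / S`, the numerator `N` of the derivative is a concave quadratic
whose vertex `(ρH + 4ρL) / (4S) = π₀ + ρH / (4S)` lies to the right of `π₀`. Factoring `N p - N π₀`
gives `N p = N π₀ - (π₀ - p) (2S (π₀ - p) + ρH)`, so on `[0, π₀]` the maximum is
`N π₀ = -ρL ρH / S < 0`. The derivative `N p / ((1 - p)² p³)` is therefore negative on `(0, π₀]`,
and the map is strictly decreasing there.
-/

lemma strictAntiOn_of_hasDerivAt_neg {D : Set ℝ} (hD : Convex ℝ D) {f f' : ℝ → ℝ}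
    (hf : ∀ x ∈ D, HasDerivAt f (f' x) x) (hf' : ∀ x ∈ D, f' x < 0) : StrictAntiOn f D :=
  strictAntiOn_of_hasDerivWithinAt_neg hD
    (fun x hx ↦ (hf x hx).continuousAt.continuousWithinAt)
    (fun x hx ↦ (hf x (interior_subset hx)).hasDerivWithinAt)
    (fun x hx ↦ hf' x (interior_subset hx))

section

variable {ρL ρH : ℝ}

lemma hasDerivAt_div_sq_mul_one_sub {p : ℝ} (hp₀ : p ≠ 0) (hp₁ : p ≠ 1) :
    HasDerivAt (fun q : ℝ => (ρL * (1 - q) - ρH * q) / (q ^ 2 * (1 - q)))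
      ((-2 * p ^ 2 * (ρH + ρL) + p * (ρH + 4 * ρL) - 2 * ρL) / ((1 - p) ^ 2 * p ^ 3)) p := by
  have h1p : 1 - p ≠ 0 := sub_ne_zero.2 (Ne.symm hp₁)
  have hnum : HasDerivAt (fun q : ℝ => ρL * (1 - q) - ρH * q) (ρL * (0 - 1) - ρH * 1) p :=
    (((hasDerivAt_const p 1).sub (hasDerivAt_id p)).const_mul ρL).sub
      ((hasDerivAt_id p).const_mul ρH)
  have hden : HasDerivAt (fun q : ℝ => q ^ 2 * (1 - q))
      (↑2 * p ^ (2 - 1) * (1 - p) + p ^ 2 * (0 - 1)) p :=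
    (hasDerivAt_pow 2 p).mul ((hasDerivAt_const p 1).sub (hasDerivAt_id p))
  refine (hnum.div hden (mul_ne_zero (pow_ne_zero 2 hp₀) h1p)).congr_deriv ?_
  field_simp
  ring

lemma quadratic_eq_max_sub (hS : ρL + ρH ≠ 0) (p : ℝ) :
    -2 * p ^ 2 * (ρH + ρL) + p * (ρH + 4 * ρL) - 2 * ρL =
      -ρL * ρH / (ρH + ρL) -
        (ρL / (ρL + ρH) - p) * (2 * (ρL + ρH) * (ρL / (ρL + ρH) - p) + ρH) := by
  rw [add_comm ρH ρL]
  field_simp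
  ring

lemma quadratic_le_max_of_le (hS : 0 < ρL + ρH) (hρH : 0 ≤ ρH) {p : ℝ}
    (hp : p ≤ ρL / (ρL + ρH)) :
    -2 * p ^ 2 * (ρH + ρL) + p * (ρH + 4 * ρL) - 2 * ρL ≤ -ρL * ρH / (ρH + ρL) := by
  have hgap : 0 ≤ ρL / (ρL + ρH) - p := sub_nonneg.2 hp
  rw [quadratic_eq_max_sub hS.ne' p, sub_le_self_iff]
  positivity

end

/-- The map `p ↦ h(p)/(p²(1-p))` is strictly decreasing on `(0, π₀]`, where
`h(p) = ρ_L(1-p) - ρ_H p`; equivalently, its derivative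
`(-2p²(ρ_H+ρ_L) + p(ρ_H+4ρ_L) - 2ρ_L)/((1-p)²p³)` is negative on `(0,π₀]`,
because the numerator attains its maximum on `[0,π₀]` at `p = π₀`, with maximal
value `-ρ_L ρ_H/(ρ_H+ρ_L) < 0`. -/
theorem stmt_4 (ρL ρH : ℝ) (hρL : 0 < ρL) (hρH : 0 < ρH) :
    StrictAntiOn
      (fun p : ℝ => (ρL * (1 - p) - ρH * p) / (p ^ 2 * (1 - p)))
      (Ioc 0 (ρL / (ρL + ρH))) ∧
    (∀ p ∈ Ioc (0:ℝ) (ρL / (ρL + ρH)),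
      HasDerivAt (fun q : ℝ => (ρL * (1 - q) - ρH * q) / (q ^ 2 * (1 - q)))
        ((-2 * p ^ 2 * (ρH + ρL) + p * (ρH + 4 * ρL) - 2 * ρL) / ((1 - p) ^ 2 * p ^ 3)) p ∧
      (-2 * p ^ 2 * (ρH + ρL) + p * (ρH + 4 * ρL) - 2 * ρL) / ((1 - p) ^ 2 * p ^ 3) < 0) ∧
    (∀ p ∈ Icc (0:ℝ) (ρL / (ρL + ρH)),
      -2 * p ^ 2 * (ρH + ρL) + p * (ρH + 4 * ρL) - 2 * ρL ≤
        -ρL * ρH / (ρH + ρL)) ∧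
    (-2 * (ρL / (ρL + ρH)) ^ 2 * (ρH + ρL) + (ρL / (ρL + ρH)) * (ρH + 4 * ρL) - 2 * ρL
        = -ρL * ρH / (ρH + ρL)) ∧
    -ρL * ρH / (ρH + ρL) < 0 := by
  have hS : 0 < ρL + ρH := add_pos hρL hρH
  have hmax_neg : -ρL * ρH / (ρH + ρL) < 0 := by
    rw [neg_mul, neg_div, neg_lt_zero]
    positivity
  have hπ₀_lt_one : ρL / (ρL + ρH) < 1 := (div_lt_one hS).2 (lt_add_of_pos_right ρL hρH)
  have hderiv : ∀ p ∈ Ioc (0:ℝ) (ρL / (ρL + ρH)),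
      HasDerivAt (fun q : ℝ => (ρL * (1 - q) - ρH * q) / (q ^ 2 * (1 - q)))
        ((-2 * p ^ 2 * (ρH + ρL) + p * (ρH + 4 * ρL) - 2 * ρL) / ((1 - p) ^ 2 * p ^ 3)) p ∧
      (-2 * p ^ 2 * (ρH + ρL) + p * (ρH + 4 * ρL) - 2 * ρL) / ((1 - p) ^ 2 * p ^ 3) < 0 := by
    rintro p ⟨hp₀, hpπ₀⟩
    have hp₁ : p < 1 := hpπ₀.trans_lt hπ₀_lt_one
    refine ⟨hasDerivAt_div_sq_mul_one_sub hp₀.ne' hp₁.ne, div_neg_of_neg_of_pos ?_ ?_⟩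
    · exact (quadratic_le_max_of_le hS hρH.le hpπ₀).trans_lt hmax_neg
    · have : 0 < 1 - p := sub_pos.2 hp₁
      positivity
  refine ⟨strictAntiOn_of_hasDerivAt_neg (convex_Ioc _ _) (fun p hp ↦ (hderiv p hp).1)
      (fun p hp ↦ (hderiv p hp).2), hderiv,
      fun p hp ↦ quadratic_le_max_of_le hS hρH.le hp.2, ?_, hmax_neg⟩
  simpa using quadratic_eq_max_sub hS.ne' (ρL / (ρL + ρH))
end

section
/- Given p̂ ∈ (π₁, π₀), there exist φ(p̂) > 0 and m(p̂) ∈ (0,1) satisfying simultaneously: (i) m(p̂)·p̂Λ·z(p̂) = -φ(p̂)·f(p̂,1); and (ii) 1 - m(p̂) = φ(p̂)·∫_{p̂}^{1} exp(∫_{p̂}^{p} r(s)ds) dp, where r(s) = -(sΛ + f'(s,1))/f(s,1). -/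
open Set intervalIntegral

/-! Conditions (i) and (ii) form a linear system `m a = φ b`, `1 - m = φ c` in `(φ, m)`,
where `a = p̂ Λ z(p̂)`, `b = -f(p̂,1)` and `c` is the integral in (ii). All three coefficients
are positive: `a` because `p̂ < π₀`, `b` because `f(·,1) < 0` on `(π₁, 1]`, and `c` because
that sign condition keeps `f(·,1)` away from zero on `[p̂, 1]`, so `r` is continuous there and
the integrand of (ii) is a continuous positive function. The unique solution
`φ = a / (a c + b)`, `m = b / (a c + b)` then has `φ > 0` and `m ∈ (0,1)`. -/

lemma exists_pos_mul_eq_and_one_sub_eq {a b c : ℝ} (ha : 0 < a) (hb : 0 < b) (hc : 0 < c) :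
    ∃ φ > (0:ℝ), ∃ m ∈ Ioo (0:ℝ) 1, m * a = φ * b ∧ 1 - m = φ * c := by
  have hK : 0 < a * c + b := by positivity
  refine ⟨a / (a * c + b), by positivity, b / (a * c + b), ⟨by positivity, ?_⟩, ?_, ?_⟩
  · rw [div_lt_one hK]
    nlinarith [mul_pos ha hc]
  · field_simp
  · field_simp
    ring

lemma integral_exp_primitive_pos {r : ℝ → ℝ} {a b : ℝ} (hab : a < b)
    (hr : IntervalIntegrable r MeasureTheory.volume a b) :
    0 < ∫ p in a..b, Real.exp (∫ s in a..p, r s) := by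
  have hprim : ContinuousOn (fun p => ∫ s in a..p, r s) (uIcc a b) :=
    continuousOn_primitive_interval' hr left_mem_uIcc
  refine intervalIntegral_pos_of_pos_on ?_ (fun _ _ => Real.exp_pos _) hab
  exact (Real.continuous_exp.comp_continuousOn hprim).intervalIntegrable

lemma lt_one_of_lt_div_add {ρL ρH p : ℝ} (hρL : 0 < ρL) (hρH : 0 < ρH)
    (hp : p < ρL / (ρL + ρH)) : p < 1 :=
  hp.trans ((div_lt_one (by positivity)).mpr (by linarith))

lemma sub_mul_pos_of_lt_div_add {ρL ρH p : ℝ} (hρL : 0 < ρL) (hρH : 0 < ρH)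
    (hp : p < ρL / (ρL + ρH)) : 0 < ρL * (1 - p) - ρH * p := by
  nlinarith [(lt_div_iff₀ (by positivity : 0 < ρL + ρH)).mp hp]

lemma intervalIntegrable_div_of_ne_zero {u v : ℝ → ℝ} {a b : ℝ} (hab : a ≤ b)
    (hu : Continuous u) (hv : Continuous v) (hv0 : ∀ s ∈ Icc a b, v s ≠ 0) :
    IntervalIntegrable (fun s => u s / v s) MeasureTheory.volume a b :=
  (hu.continuousOn.div hv.continuousOn hv0).intervalIntegrable_of_Icc hab

theorem stmt_16_general (ρL ρH Λ π₁ phat : ℝ) (hρL : 0 < ρL) (hρH : 0 < ρH) (hΛ : 0 < Λ)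
    (hπ₁ : π₁ ∈ Ioo (0:ℝ) (ρL / (ρL + ρH)))
    (hneg : ∀ p : ℝ, π₁ < p → p ≤ 1 → ρL * (1 - p) - ρH * p - p * (1 - p) * Λ < 0)
    (hphat : phat ∈ Ioo π₁ (ρL / (ρL + ρH))) :
    ∃ φ0 > (0:ℝ), ∃ m ∈ Ioo (0:ℝ) 1,
      m * (phat * Λ * ((ρL * (1 - phat) - ρH * phat) / (phat * (1 - phat) * Λ))) =
        -φ0 * (ρL * (1 - phat) - ρH * phat - phat * (1 - phat) * Λ) ∧
      1 - m = φ0 * ∫ p in phat..(1:ℝ), Real.exp (∫ s in phat..p,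
        -(s * Λ + (-(ρL + ρH) - (1 - 2 * s) * Λ)) /
          (ρL * (1 - s) - ρH * s - s * (1 - s) * Λ)) := by
  have hphat0 : 0 < phat := hπ₁.1.trans hphat.1
  have hphat1 : phat < 1 := lt_one_of_lt_div_add hρL hρH hphat.2
  have hN := sub_mul_pos_of_lt_div_add hρL hρH hphat.2
  have hf : ∀ s ∈ Icc phat 1, ρL * (1 - s) - ρH * s - s * (1 - s) * Λ < 0 :=
    fun s hs => hneg s (hphat.1.trans_le hs.1) hs.2
  have hz : 0 < phat * Λ * ((ρL * (1 - phat) - ρH * phat) / (phat * (1 - phat) * Λ)) := by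
    have : 0 < 1 - phat := sub_pos.mpr hphat1
    positivity
  have hfphat : 0 < -(ρL * (1 - phat) - ρH * phat - phat * (1 - phat) * Λ) :=
    neg_pos.mpr (hf phat ⟨le_rfl, hphat1.le⟩)
  have hI := integral_exp_primitive_pos hphat1
    (intervalIntegrable_div_of_ne_zero (u := fun s => -(s * Λ + (-(ρL + ρH) - (1 - 2 * s) * Λ)))
      hphat1.le (by fun_prop) (by fun_prop) fun s hs => (hf s hs).ne)
  obtain ⟨φ, hφ, m, hm, hatom, hmass⟩ := exists_pos_mul_eq_and_one_sub_eq hz hfphat hI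
  exact ⟨φ, hφ, m, hm, by rw [hatom]; ring, hmass⟩

/-- Given `p̂ ∈ (π₁, π₀)`, there exist `φ(p̂) > 0` and `m(p̂) ∈ (0,1)` with
(i) `m(p̂)·p̂Λ·z(p̂) = -φ(p̂)·f(p̂,1)`; and
(ii) `1 - m(p̂) = φ(p̂)·∫_{p̂}^{1} exp(∫_{p̂}^{p} r(s)ds) dp`, where
`r(s) = -(sΛ + f'(s,1))/f(s,1)`. -/
theorem stmt_16 (ρL ρH Λ π₁ phat : ℝ) (hρL : 0 < ρL) (hρH : 0 < ρH) (hΛ : 0 < Λ)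
    (hπ₁ : π₁ ∈ Ioo (0:ℝ) (ρL / (ρL + ρH)))
    (hroot : ρL * (1 - π₁) - ρH * π₁ - π₁ * (1 - π₁) * Λ = 0)
    (hneg : ∀ p : ℝ, π₁ < p → p ≤ 1 → ρL * (1 - p) - ρH * p - p * (1 - p) * Λ < 0)
    (hphat : phat ∈ Ioo π₁ (ρL / (ρL + ρH))) :
    ∃ φ0 > (0:ℝ), ∃ m ∈ Ioo (0:ℝ) 1,
      m * (phat * Λ * ((ρL * (1 - phat) - ρH * phat) / (phat * (1 - phat) * Λ))) =
        -φ0 * (ρL * (1 - phat) - ρH * phat - phat * (1 - phat) * Λ) ∧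
      1 - m = φ0 * ∫ p in phat..(1:ℝ), Real.exp (∫ s in phat..p,
        -(s * Λ + (-(ρL + ρH) - (1 - 2 * s) * Λ)) /
          (ρL * (1 - s) - ρH * s - s * (1 - s) * Λ)) :=
  stmt_16_general ρL ρH Λ π₁ phat hρL hρH hΛ hπ₁ hneg hphat
end
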